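/- Let p_1,…,p_n be i.i.d. uniform random elements of {1,…,d}, and let X_n = |{p_i : i ∈ {1,…,n}}| be the number of distinct values among them. Then for any real t with t ≤ 0.99·d and any n ≥ 750·t, P[X_n ≤ t·(1 + 2/10000)] ≤ exp(−min(d, n)/18). -/

import Mathlib

/-!
If at most `m = ⌊t (1 + 2·10⁻⁴)⌋` values occur, all samples lie in one of the `C(d, m)` subsets
of size `m`, and each such subset contains all samples with probability `(m/d)^n`. Since
`C(d, m) (m/d)^m ≤ m^m / m! ≤ e^m` and `r ≤ e^(r - 1)`, the union bound gives
`C(d, m) (m/d)^n ≤ exp (m - (1 - m/d) (n - m))`, and `m/d ≤ 0.9902`, `n ≥ 749 m` make this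
exponent at most `-min(d, n)/18`.
-/

open MeasureTheory
open scoped ENNReal NNReal

noncomputable section

/-- The law of `n` i.i.d. uniform random elements of `{1,…,d}` (encoded as `Fin d`). -/
def uniformTuples (n d : ℕ) : Measure (Fin n → Fin d) :=
  Measure.pi fun _ => ((d : ℝ≥0∞))⁻¹ • Measure.count

instance isFiniteMeasure_natCast_inv_smul_count (d : ℕ) :
    IsFiniteMeasure ((d : ℝ≥0∞)⁻¹ • Measure.count : Measure (Fin d)) := by
  refine ⟨?_⟩
  rcases d.eq_zero_or_pos with rfl | hd
  · simp
  · simp [ENNReal.inv_mul_cancel, hd.ne']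

theorem uniformTuples_pi_finset (n d : ℕ) (S : Finset (Fin d)) :
    uniformTuples n d (Set.univ.pi fun _ => (S : Set (Fin d))) = ((S.card : ℝ≥0∞) / d) ^ n := by
  rw [uniformTuples, Measure.pi_pi]
  simp [div_eq_mul_inv, mul_comm]

theorem uniformTuples_card_image_le (n d m : ℕ) (hmd : m ≤ d) :
    uniformTuples n d {p | (Finset.univ.image p).card ≤ m} ≤
      d.choose m * ((m : ℝ≥0∞) / d) ^ n := by
  have hcover : {p : Fin n → Fin d | (Finset.univ.image p).card ≤ m} ⊆
      ⋃ S ∈ (Finset.univ : Finset (Fin d)).powersetCard m,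
        Set.univ.pi fun _ : Fin n => (S : Set (Fin d)) := by
    intro p hp
    obtain ⟨S, hpS, hS⟩ := Finset.exists_superset_card_eq hp (by simpa using hmd)
    exact Set.mem_biUnion (Finset.mem_powersetCard.2 ⟨Finset.subset_univ S, hS⟩)
      fun i _ => hpS (Finset.mem_image_of_mem p (Finset.mem_univ i))
  calc uniformTuples n d _
      ≤ ∑ S ∈ (Finset.univ : Finset (Fin d)).powersetCard m,
          uniformTuples n d (Set.univ.pi fun _ => (S : Set (Fin d))) :=
        (measure_mono hcover).trans (measure_biUnion_finset_le _ _)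
    _ = d.choose m * ((m : ℝ≥0∞) / d) ^ n := by
        rw [Finset.sum_congr rfl fun S hS => by
          rw [uniformTuples_pi_finset, (Finset.mem_powersetCard.1 hS).2]]
        simp

theorem Nat.choose_mul_div_pow_le_exp (d m : ℕ) :
    (d.choose m : ℝ) * ((m : ℝ) / d) ^ m ≤ Real.exp m := by
  have hdm : (d : ℝ) * (m / d) ≤ m := by
    rcases d.eq_zero_or_pos with rfl | hd
    · simp
    · rw [mul_div_cancel₀ _ (by positivity)]
  calc (d.choose m : ℝ) * ((m : ℝ) / d) ^ m
      ≤ (d : ℝ) ^ m / m.factorial * ((m : ℝ) / d) ^ m :=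
        mul_le_mul_of_nonneg_right (Nat.choose_le_pow_div m d) (by positivity)
    _ = ((d : ℝ) * (m / d)) ^ m / m.factorial := by rw [mul_pow]; ring
    _ ≤ (m : ℝ) ^ m / m.factorial := by gcongr
    _ ≤ Real.exp m := Real.pow_div_factorial_le_exp _ (Nat.cast_nonneg _) m

theorem Real.pow_le_exp_sub_one_mul {r : ℝ} (hr : 0 ≤ r) (k : ℕ) :
    r ^ k ≤ Real.exp ((r - 1) * k) := by
  rw [mul_comm, Real.exp_nat_mul]
  exact pow_le_pow_left₀ hr (by linarith [Real.add_one_le_exp (r - 1)]) k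

theorem Nat.choose_mul_div_pow_le_exp_of_le (d m n : ℕ) (hmn : m ≤ n) :
    (d.choose m : ℝ) * ((m : ℝ) / d) ^ n ≤ Real.exp (m - (1 - m / d) * (n - m)) := by
  obtain ⟨k, rfl⟩ := Nat.exists_eq_add_of_le hmn
  calc (d.choose m : ℝ) * ((m : ℝ) / d) ^ (m + k)
      = (d.choose m : ℝ) * ((m : ℝ) / d) ^ m * ((m : ℝ) / d) ^ k := by ring
    _ ≤ Real.exp m * Real.exp ((m / d - 1) * k) := by
        gcongr
        · exact Nat.choose_mul_div_pow_le_exp d m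
        · exact Real.pow_le_exp_sub_one_mul (by positivity) k
    _ = Real.exp (m - (1 - m / d) * ((m + k : ℕ) - m)) := by
        rw [← Real.exp_add]; push_cast; ring_nf

theorem sub_one_sub_div_mul_le_neg_min_div_eighteen {m d n : ℝ} (hm : 0 ≤ m)
    (hmd : m ≤ 0.9902 * d) (hmn : 749 * m ≤ n) :
    m - (1 - m / d) * (n - m) ≤ -min d n / 18 := by
  rcases (show 0 ≤ d by linarith).eq_or_lt with rfl | hd
  · obtain rfl : m = 0 := by linarith
    simp only [div_zero, sub_zero, one_mul, zero_sub]
    linarith [min_le_right 0 n]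
  have hr : m / d ≤ 0.9902 := (div_le_iff₀ hd).2 hmd
  have hrd : m / d * d = m := div_mul_cancel₀ m hd.ne'
  rcases le_or_gt 0.94 (m / d) with hr94 | hr94
  · have hdm : 0.94 * d ≤ m := by nlinarith
    nlinarith [min_le_left d n,
      mul_nonneg (by linarith : 0 ≤ 1 - m / d - 0.0098) (by linarith : 0 ≤ n - m)]
  · nlinarith [min_le_right d n,
      mul_nonneg (by linarith : 0 ≤ 1 - m / d - 0.06) (by linarith : 0 ≤ n - m)]

theorem ENNReal.natCast_div_natCast_eq_ofReal {m d : ℕ} (hmd : m ≤ d) :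
    (m : ℝ≥0∞) / d = ENNReal.ofReal (m / d) := by
  rcases d.eq_zero_or_pos with rfl | hd
  · simp [Nat.le_zero.1 hmd]
  · rw [ENNReal.ofReal_div_of_pos (by positivity), ENNReal.ofReal_natCast,
      ENNReal.ofReal_natCast]

/-- Number of unique elements among `n` i.i.d. uniform samples from `{1,…,d}`, special case:
for any real `t ≤ 0.99 d` and any `n ≥ 750 t`,
`P[X_n ≤ t(1 + 2/10000)] ≤ exp(−min(d,n)/18)`. -/
theorem unique_elements_sampling_special_case (n d : ℕ) (t : ℝ)
    (ht : t ≤ 0.99 * d) (hn : (n : ℝ) ≥ 750 * t) :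
    uniformTuples n d
        {p | ((Finset.univ.image p).card : ℝ) ≤ t * (1 + 2 / 10000)} ≤
      ENNReal.ofReal (Real.exp (-(min (d : ℝ) (n : ℝ)) / 18)) := by
  set m := ⌊t * (1 + 2 / 10000)⌋₊
  -- `0.99 (1 + 2·10⁻⁴) ≤ 0.9902` and `750 / (1 + 2·10⁻⁴) ≥ 749`
  obtain ⟨hmd, hmn⟩ : (m : ℝ) ≤ 0.9902 * d ∧ 749 * (m : ℝ) ≤ n := by
    rcases lt_or_ge t 0 with ht0 | ht0
    · simp only [m, Nat.floor_eq_zero.2 (by linarith : t * (1 + 2 / 10000) < 1), Nat.cast_zero,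
        mul_zero]
      exact ⟨by positivity, n.cast_nonneg⟩
    · have : (m : ℝ) ≤ t * (1 + 2 / 10000) := Nat.floor_le (by positivity)
      constructor <;> linarith
  have hmd' : m ≤ d := by exact_mod_cast (show (m : ℝ) ≤ d by linarith)
  have hmn' : m ≤ n := by exact_mod_cast (show (m : ℝ) ≤ n by linarith)
  calc uniformTuples n d _
      ≤ uniformTuples n d {p | (Finset.univ.image p).card ≤ m} :=
        measure_mono fun p hp => Nat.le_floor hp
    _ ≤ d.choose m * ((m : ℝ≥0∞) / d) ^ n := uniformTuples_card_image_le n d m hmd'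
    _ = ENNReal.ofReal (d.choose m * ((m : ℝ) / d) ^ n) := by
        rw [ENNReal.natCast_div_natCast_eq_ofReal hmd', ENNReal.ofReal_mul (by positivity),
          ENNReal.ofReal_pow (by positivity), ENNReal.ofReal_natCast]
    _ ≤ ENNReal.ofReal (Real.exp (-(min (d : ℝ) (n : ℝ)) / 18)) :=
        ENNReal.ofReal_le_ofReal <| (Nat.choose_mul_div_pow_le_exp_of_le d m n hmn').trans <|
          Real.exp_le_exp.2 (sub_one_sub_div_mul_le_neg_min_div_eighteen m.cast_nonneg hmd hmn)

end
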